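/- Let B be a subset of cyclically reduced words that is exponentially generic in the set C of cyclically reduced words of a free group of rank r ≥ 2. Let A be the set of all reduced words w ∈ F whose cyclic reduction lies in B. Then A is exponentially generic in F. -/

import Mathlib

/-- A letter in the alphabet of a free group of rank `r`: a basis element together
with a sign (`true` = positive, `false` = inverse). The alphabet has `2r` letters. -/
abbrev Letter (r : ℕ) := Fin r × Bool

/-- The formal inverse of a letter. -/
def Letter.inv {r : ℕ} (x : Letter r) : Letter r := (x.1, !x.2)

/-- A word is reduced if no letter is immediately followed by its inverse. -/
def Reduced {r : ℕ} (w : List (Letter r)) : Prop :=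
  List.Chain' (fun a b => b ≠ Letter.inv a) w

/-- A word is cyclically reduced if it is reduced and its first letter is not
the inverse of its last letter. -/
def CyclicallyReduced {r : ℕ} (w : List (Letter r)) : Prop :=
  Reduced w ∧ ∀ a b, w.head? = some a → w.getLast? = some b → a ≠ Letter.inv b

/-- `CyclicReductionOf w u` holds if `u` is a reduced word whose cyclic reduction is the
cyclically reduced word `w`, i.e. `u = a⁻¹ w a` as a reduced product for some word `a`. -/
def CyclicReductionOf {r : ℕ} (w u : List (Letter r)) : Prop :=
  CyclicallyReduced w ∧ Reduced u ∧
    ∃ a : List (Letter r), u = (a.map Letter.inv).reverse ++ w ++ a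

/-- The number of words in `A` of length exactly `n` (shell count). -/
noncomputable def shellCount (r : ℕ) (A : Set (List (Letter r))) (n : ℕ) : ℕ :=
  Nat.card {w : List (Letter r) // w ∈ A ∧ w.length = n}

/-- The number of words in `A` of length at most `n` (ball count). -/
noncomputable def ballCount (r : ℕ) (A : Set (List (Letter r))) (n : ℕ) : ℕ :=
  Nat.card {w : List (Letter r) // w ∈ A ∧ w.length ≤ n}

/-- The set of cyclically reduced words. -/
def CRset (r : ℕ) : Set (List (Letter r)) := {w | CyclicallyReduced w}

/-- `A` is exponentially generic in `B` if the proportion of the ball of radius `n` of `B`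
missed by `A` is at most `e^{b - cn}` for all sufficiently large `n`, for some `c > 0`. -/
def ExpGeneric (r : ℕ) (A B : Set (List (Letter r))) : Prop :=
  ∃ c > (0 : ℝ), ∃ b : ℝ, ∃ N : ℕ, ∀ n : ℕ, N ≤ n →
    1 - (ballCount r A n : ℝ) / (ballCount r B n : ℝ) ≤ Real.exp (b - c * n)


/-!
Every reduced word `u` is `a⁻¹ w a` with `w` its cyclic reduction, and `|u| = 2|a| + |w|`.
So a reduced word of length at most `n` that is not in `A` is determined by a word `a` of some
length `k ≤ n / 2` and a word `w ∈ C \ B` of length at most `n - 2k`. With `Q = 2r - 1`,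
balls of reduced words have between `Q^n` and `2 Q^n` elements, and genericity of `B` gives
`#(C \ B)_{≤ m} ≤ M (Qθ)^m` for some `θ < 1` which we may take `≥ 3/4`. Then
`2r ≤ (8/9)(Qθ)²`, so the sum over `k` of `(2r)^k M (Qθ)^(n-2k)` is a geometric series bounded
by `9 M (Qθ)^n`, an exponentially small fraction of the `≥ Q^n` reduced words.
-/

open Finset

section WordCounting

variable {α : Type*}

lemma List.finite_subtype_length_le (P : List α → Prop) [Finite α] (n : ℕ) :
    Finite {w : List α // P w ∧ w.length ≤ n} :=
  ((List.finite_length_le α n).subset fun _ hw => hw.2).to_subtype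

lemma List.finite_subtype_length_eq (P : List α → Prop) [Finite α] (n : ℕ) :
    Finite {w : List α // P w ∧ w.length = n} :=
  ((List.finite_length_eq α n).subset fun _ hw => hw.2).to_subtype

lemma Nat.card_subtype_length_succ [Fintype α] (P : List α → Prop) (j : ℕ) :
    Nat.card {w : List α // P w ∧ w.length = j + 1} =
      ∑ a, Nat.card {t : List α // P (a :: t) ∧ t.length = j} := by
  have := fun a : α => List.finite_subtype_length_eq (fun t => P (a :: t)) j
  rw [← Nat.card_sigma]
  symm
  refine Nat.card_eq_of_bijective
    (fun x => ⟨x.1 :: x.2.1, x.2.2.1, by simp [x.2.2.2]⟩) ⟨?_, ?_⟩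
  · rintro ⟨a, t, ht⟩ ⟨b, s, hs⟩ h
    simp only [Subtype.mk.injEq, List.cons.injEq] at h
    obtain ⟨rfl, rfl⟩ := h
    rfl
  · rintro ⟨_ | ⟨a, t⟩, hw, hlen⟩
    · simp at hlen
    · exact ⟨⟨a, t, hw, by simpa using hlen⟩, rfl⟩

lemma Nat.card_list_length_eq [Fintype α] (k : ℕ) :
    Nat.card {l : List α // l.length = k} = Fintype.card α ^ k :=
  (Nat.card_eq_fintype_card (α := List.Vector α k)).trans (card_vector k)

end WordCounting

section

variable {r : ℕ}

abbrev NoCancel (a b : Letter r) : Prop := b ≠ Letter.inv a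

lemma Letter.inv_ne_self (x : Letter r) : Letter.inv x ≠ x := by
  simp [Letter.inv, Prod.ext_iff]

lemma card_isChain_cons (p : Letter r) (j : ℕ) :
    Nat.card {w : List (Letter r) // (p :: w).IsChain NoCancel ∧ w.length = j} =
      (2 * r - 1) ^ j := by
  induction j generalizing p with
  | zero =>
    rw [pow_zero, Nat.card_eq_one_iff_exists]
    exact ⟨⟨[], by simp⟩, fun ⟨w, _, hw⟩ => by simp [List.length_eq_zero_iff.mp hw]⟩
  | succ j ih =>
    have hy (y : Letter r) :
        Nat.card {t : List (Letter r) // (p :: y :: t).IsChain NoCancel ∧ t.length = j} =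
          if y = Letter.inv p then 0 else (2 * r - 1) ^ j := by
      split_ifs with h
      · simp [h]
      · simpa [h] using ih y
    rw [Nat.card_subtype_length_succ, sum_congr rfl fun y _ => hy y, sum_ite, sum_const_zero,
      zero_add, sum_const, filter_ne', card_erase_of_mem (mem_univ _), card_univ]
    simp [pow_succ, mul_comm]

lemma reduced_iff_isChain (w : List (Letter r)) : Reduced w ↔ w.IsChain NoCancel := Iff.rfl

lemma shellCount_reduced_succ (j : ℕ) :
    shellCount r {u | Reduced u} (j + 1) = 2 * r * (2 * r - 1) ^ j := by
  simp only [shellCount, Set.mem_ofPred_eq, reduced_iff_isChain, Nat.card_subtype_length_succ,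
    card_isChain_cons, sum_const, card_univ]
  simp [mul_comm]

section BallCount

variable {A S : Set (List (Letter r))}

lemma ballCount_eq_ncard (A : Set (List (Letter r))) (n : ℕ) :
    ballCount r A n = (A ∩ {w | w.length ≤ n}).ncard :=
  (Nat.card_coe_set_eq _).symm

lemma shellCount_eq_ncard (A : Set (List (Letter r))) (n : ℕ) :
    shellCount r A n = (A ∩ {w | w.length = n}).ncard :=
  (Nat.card_coe_set_eq _).symm

lemma finite_inter_length_le (A : Set (List (Letter r))) (n : ℕ) :
    (A ∩ {w | w.length ≤ n}).Finite :=
  (List.finite_length_le _ n).subset Set.inter_subset_right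

lemma ballCount_mono (h : A ⊆ S) (n : ℕ) : ballCount r A n ≤ ballCount r S n := by
  simp only [ballCount_eq_ncard]
  exact Set.ncard_le_ncard (Set.inter_subset_inter_left _ h) (finite_inter_length_le S n)

lemma ballCount_add_ballCount_diff (h : A ⊆ S) (n : ℕ) :
    ballCount r A n + ballCount r (S \ A) n = ballCount r S n := by
  simp only [ballCount_eq_ncard]
  rw [← Set.ncard_union_eq
    (Set.disjoint_sdiff_right.mono Set.inter_subset_left Set.inter_subset_left)
    (finite_inter_length_le A n) (finite_inter_length_le _ n), ← Set.union_inter_distrib_right,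
    Set.union_sdiff_cancel h]

lemma ballCount_succ (A : Set (List (Letter r))) (n : ℕ) :
    ballCount r A (n + 1) = ballCount r A n + shellCount r A (n + 1) := by
  rw [ballCount_eq_ncard, ballCount_eq_ncard, shellCount_eq_ncard, ← Set.ncard_union_eq
    (Set.disjoint_left.2 fun w h₁ h₂ => by simp_all) (finite_inter_length_le A n)
    ((finite_inter_length_le A (n + 1)).subset fun w hw => ⟨hw.1, hw.2.le⟩),
    ← Set.inter_union_distrib_left]
  congr 2
  ext w
  show w.length ≤ n + 1 ↔ w.length ≤ n ∨ w.length = n + 1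
  omega

lemma ballCount_pos (h : [] ∈ A) (n : ℕ) : 0 < ballCount r A n := by
  rw [ballCount_eq_ncard]
  exact (Set.ncard_pos (finite_inter_length_le A n)).2 ⟨[], h, by simp⟩

lemma ballCount_zero_le_one (A : Set (List (Letter r))) : ballCount r A 0 ≤ 1 := by
  rw [ballCount_eq_ncard]
  calc (A ∩ {w | w.length ≤ 0}).ncard ≤ ({[]} : Set (List (Letter r))).ncard :=
        Set.ncard_le_ncard (fun w hw => by simpa using hw.2)
    _ = 1 := Set.ncard_singleton _

end BallCount

lemma crset_subset_reduced : CRset r ⊆ {u | Reduced u} := fun _ hw => hw.1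

lemma nil_mem_reduced : ([] : List (Letter r)) ∈ {u | Reduced u} := List.IsChain.nil

lemma pow_le_ballCount_reduced (n : ℕ) : (2 * r - 1) ^ n ≤ ballCount r {u | Reduced u} n := by
  cases n with
  | zero => exact ballCount_pos nil_mem_reduced 0
  | succ n =>
    rw [ballCount_succ, shellCount_reduced_succ, pow_succ']
    exact le_add_left (Nat.mul_le_mul_right _ (Nat.sub_le _ _))

lemma ballCount_reduced_le (hr : 2 ≤ r) (n : ℕ) :
    ballCount r {u | Reduced u} n ≤ 2 * (2 * r - 1) ^ n := by
  induction n with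
  | zero => simpa using (ballCount_zero_le_one _).trans one_le_two
  | succ n ih =>
    rw [ballCount_succ, shellCount_reduced_succ, pow_succ]
    have : 2 + 2 * r ≤ 2 * (2 * r - 1) := by omega
    nlinarith [Nat.zero_le ((2 * r - 1) ^ n)]

lemma exists_eq_inv_cons_append_of_not_cyclicallyReduced {u : List (Letter r)} (hu : Reduced u)
    (hc : ¬CyclicallyReduced u) : ∃ y s, u = Letter.inv y :: (s ++ [y]) := by
  rcases u with _ | ⟨x, t⟩
  · exact absurd ⟨hu, by simp⟩ hc
  rcases List.eq_nil_or_concat t with rfl | ⟨s, y, rfl⟩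
  · exact absurd ⟨hu, by simpa using (Letter.inv_ne_self x).symm⟩ hc
  refine ⟨y, s, ?_⟩
  by_contra hx
  refine hc ⟨hu, fun a b ha hb => ?_⟩
  rw [List.concat_eq_append, ← List.cons_append, List.getLast?_concat] at hb
  simp_all

theorem Reduced.exists_cyclicallyReduced {u : List (Letter r)} (hu : Reduced u) :
    ∃ w a, CyclicallyReduced w ∧ u = (a.map Letter.inv).reverse ++ w ++ a := by
  induction h : u.length using Nat.strong_induction_on generalizing u with
  | _ n ih =>
    by_cases hc : CyclicallyReduced u
    · exact ⟨u, [], hc, by simp⟩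
    obtain ⟨y, s, rfl⟩ := exists_eq_inv_cons_append_of_not_cyclicallyReduced hu hc
    obtain ⟨w, a, hw, rfl⟩ := ih s.length (by simp [← h]) hu.tail.left_of_append rfl
    exact ⟨w, a ++ [y], hw, by simp⟩

lemma ballCount_conj_le (S : Set (List (Letter r))) (n : ℕ) :
    ballCount r {u | ∃ w ∈ S, ∃ a, u = (a.map Letter.inv).reverse ++ w ++ a} n ≤
      ∑ k ∈ range (n / 2 + 1), (2 * r) ^ k * ballCount r S (n - 2 * k) := by
  have (k : ℕ) : Finite {a : List (Letter r) // a.length = k} :=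
    (List.finite_length_eq _ k).to_subtype
  have := List.finite_subtype_length_le (· ∈ S)
  let f : (Σ k : Fin (n / 2 + 1), {a : List (Letter r) // a.length = k} ×
      {w // w ∈ S ∧ w.length ≤ n - 2 * k}) →
      {u // u ∈ {u | ∃ w ∈ S, ∃ a, u = (a.map Letter.inv).reverse ++ w ++ a} ∧ u.length ≤ n} :=
    fun ⟨k, ⟨a, ha⟩, ⟨w, hw, hlen⟩⟩ => ⟨(a.map Letter.inv).reverse ++ w ++ a, ⟨w, hw, a, rfl⟩,
      by simp only [List.length_append, List.length_reverse, List.length_map]; omega⟩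
  have hf : Function.Surjective f := by
    rintro ⟨_, ⟨w, hw, a, rfl⟩, hlen⟩
    simp only [List.length_append, List.length_reverse, List.length_map] at hlen
    exact ⟨⟨⟨a.length, by omega⟩, ⟨a, rfl⟩, ⟨w, hw, by simp only; omega⟩⟩, rfl⟩
  calc _ ≤ _ := Nat.card_le_card_of_surjective f hf
    _ = _ := by
      rw [Nat.card_sigma,
        ← Fin.sum_univ_eq_sum_range (fun k => (2 * r) ^ k * ballCount r S (n - 2 * k))]
      simp [Nat.card_prod, Nat.card_list_length_eq, ballCount, mul_comm]

lemma reduced_diff_subset_conj (B : Set (List (Letter r))) :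
    {u | Reduced u} \ {u | ∃ w ∈ B, CyclicReductionOf w u} ⊆
      {u | ∃ w ∈ CRset r \ B, ∃ a, u = (a.map Letter.inv).reverse ++ w ++ a} := by
  rintro u ⟨hu, hA⟩
  obtain ⟨w, a, hw, rfl⟩ := Reduced.exists_cyclicallyReduced hu
  exact ⟨w, ⟨hw, fun hwB => hA ⟨w, hwB, hw, hu, a, rfl⟩⟩, a, rfl⟩

lemma sum_pow_mul_le {q ρ l M : ℝ} {d : ℕ → ℝ} (hq : 0 ≤ q) (hρ : 0 ≤ ρ) (hl₀ : 0 ≤ l)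
    (hl₁ : l < 1) (hqρ : q ≤ l * ρ ^ 2) (hM : 0 ≤ M) (hd : ∀ m, d m ≤ M * ρ ^ m) (n : ℕ) :
    ∑ k ∈ range (n / 2 + 1), q ^ k * d (n - 2 * k) ≤ M / (1 - l) * ρ ^ n := by
  have hterm : ∀ k ∈ range (n / 2 + 1), q ^ k * d (n - 2 * k) ≤ M * ρ ^ n * l ^ k := by
    intro k hk
    have h2k : 2 * k + (n - 2 * k) = n := by have := mem_range.1 hk; omega
    calc q ^ k * d (n - 2 * k) ≤ q ^ k * (M * ρ ^ (n - 2 * k)) := by gcongr; exact hd _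
      _ ≤ (l * ρ ^ 2) ^ k * (M * ρ ^ (n - 2 * k)) := by gcongr
      _ = M * ρ ^ (2 * k + (n - 2 * k)) * l ^ k := by rw [mul_pow, ← pow_mul, pow_add]; ring
      _ = M * ρ ^ n * l ^ k := by rw [h2k]
  calc ∑ k ∈ range (n / 2 + 1), q ^ k * d (n - 2 * k)
      ≤ ∑ k ∈ range (n / 2 + 1), M * ρ ^ n * l ^ k := sum_le_sum hterm
    _ = M * ρ ^ n * ∑ k ∈ range (n / 2 + 1), l ^ k := (mul_sum ..).symm
    _ ≤ M * ρ ^ n * (1 - l)⁻¹ := by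
      gcongr
      simpa using geom_sum_Ico_le_of_lt_one (m := 0) (n := n / 2 + 1) hl₀ hl₁
    _ = M / (1 - l) * ρ ^ n := by ring

section ExpGeneric

variable {A B S : Set (List (Letter r))}

open Real

lemma ExpGeneric.ballCount_diff_le (h : ExpGeneric r B S) (hBS : B ⊆ S) :
    ∃ c > (0 : ℝ), ∃ b : ℝ, ∃ N : ℕ, ∀ m ≥ N,
      (ballCount r (S \ B) m : ℝ) ≤ ballCount r S m * exp (b - c * m) := by
  obtain ⟨c, hc, b, N, h⟩ := h
  refine ⟨c, hc, b, N, fun m hm => ?_⟩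
  have hsum : (ballCount r B m : ℝ) + ballCount r (S \ B) m = ballCount r S m := by
    exact_mod_cast ballCount_add_ballCount_diff hBS m
  rcases (Nat.cast_nonneg (ballCount r S m) : (0 : ℝ) ≤ _).eq_or_lt with h0 | hpos
  · rw [← h0, zero_mul]
    linarith [(Nat.cast_nonneg (ballCount r B m) : (0 : ℝ) ≤ _)]
  · have := h m hm
    rw [one_sub_div hpos.ne', ← hsum, add_sub_cancel_left, hsum, div_le_iff₀ hpos] at this
    linarith

lemma ExpGeneric.exists_ballCount_diff_le_pow (h : ExpGeneric r B S) (hBS : B ⊆ S) {K Q : ℝ}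
    (hK : 0 ≤ K) (hQ : 0 ≤ Q) (hS : ∀ m, (ballCount r S m : ℝ) ≤ K * Q ^ m) {θ₀ : ℝ}
    (hθ₀ : θ₀ < 1) : ∃ θ, θ₀ ≤ θ ∧ θ < 1 ∧ ∃ M, 0 ≤ M ∧
      ∀ m, (ballCount r (S \ B) m : ℝ) ≤ M * (Q * θ) ^ m := by
  obtain ⟨c, hc, b, N, hD⟩ := h.ballCount_diff_le hBS
  set θ := max (exp (-c)) θ₀
  have hθ : 0 < θ := lt_max_of_lt_left (exp_pos _)
  have hθ₁ : θ < 1 := max_lt (exp_lt_one_iff.2 (neg_lt_zero.2 hc)) hθ₀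
  refine ⟨θ, le_max_right _ _, hθ₁, K * (exp b + (θ ^ N)⁻¹), by positivity, fun m => ?_⟩
  rcases le_or_gt N m with hm | hm
  · calc (ballCount r (S \ B) m : ℝ) ≤ ballCount r S m * exp (b - c * m) := hD m hm
      _ ≤ K * Q ^ m * (exp b * θ ^ m) := by
        rw [show exp (b - c * m) = exp b * exp (-c) ^ m by
          rw [← exp_nat_mul, ← exp_add]; ring_nf]
        gcongr
        exacts [hS m, le_max_left _ _]
      _ ≤ K * (exp b + (θ ^ N)⁻¹) * (Q * θ) ^ m := by
        rw [mul_pow]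
        have : 0 ≤ K * (θ ^ N)⁻¹ * (Q ^ m * θ ^ m) := by positivity
        nlinarith
  · have hDS : (ballCount r (S \ B) m : ℝ) ≤ ballCount r S m := by
      exact_mod_cast ballCount_mono Set.sdiff_subset m
    calc (ballCount r (S \ B) m : ℝ) ≤ K * Q ^ m := hDS.trans (hS m)
      _ = K * (θ ^ m)⁻¹ * (Q * θ) ^ m := by field_simp; ring
      _ ≤ K * (θ ^ N)⁻¹ * (Q * θ) ^ m := by
        gcongr K * ?_ * _
        exact inv_anti₀ (by positivity) (pow_le_pow_of_le_one hθ.le hθ₁.le hm.le)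
      _ ≤ K * (exp b + (θ ^ N)⁻¹) * (Q * θ) ^ m := by gcongr; linarith [exp_pos b]

lemma expGeneric_of_ballCount_diff_le (hAS : A ⊆ S) (hS : ∀ n, 0 < ballCount r S n) {θ M : ℝ}
    (hθ₀ : 0 < θ) (hθ₁ : θ < 1)
    (h : ∀ n, (ballCount r (S \ A) n : ℝ) ≤ M * θ ^ n * ballCount r S n) : ExpGeneric r A S := by
  refine ⟨-log θ, neg_pos.2 (log_neg hθ₀ hθ₁), log (max M 1), 0, fun n _ => ?_⟩
  have hpos : (0 : ℝ) < ballCount r S n := by exact_mod_cast hS n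
  have hsum : (ballCount r A n : ℝ) + ballCount r (S \ A) n = ballCount r S n := by
    exact_mod_cast ballCount_add_ballCount_diff hAS n
  have hexp : exp (log (max M 1) - -log θ * n) = max M 1 * θ ^ n := by
    rw [sub_eq_add_neg, exp_add, exp_log (by positivity), neg_mul, neg_neg, mul_comm (log θ),
      ← log_pow, exp_log (by positivity)]
  rw [hexp, one_sub_div hpos.ne', ← hsum, add_sub_cancel_left, hsum, div_le_iff₀ hpos]
  exact (h n).trans (by gcongr; exact le_max_left _ _)

end ExpGeneric

end

/-- If `B` is an exponentially generic subset of the cyclically reduced words `C`, then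
the set `A` of all reduced words whose cyclic reduction lies in `B` is exponentially
generic in the set of all reduced words (the free group `F`). -/
theorem stmt6 (r : ℕ) (hr : 2 ≤ r) (B : Set (List (Letter r))) (hB : B ⊆ CRset r)
    (hgen : ExpGeneric r B (CRset r)) :
    ExpGeneric r {u | ∃ w ∈ B, CyclicReductionOf w u} {u | Reduced u} := by
  set Q : ℝ := 2 * r - 1 with hQdef
  have hQ : ((2 * r - 1 : ℕ) : ℝ) = Q := by rw [Nat.cast_sub (by omega)]; push_cast; ring
  have hQ₃ : 3 ≤ Q := by
    have : (2 : ℝ) ≤ r := by exact_mod_cast hr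
    linarith
  have hC (m : ℕ) : (ballCount r (CRset r) m : ℝ) ≤ 2 * Q ^ m := by
    rw [← hQ]
    exact_mod_cast (ballCount_mono crset_subset_reduced m).trans (ballCount_reduced_le hr m)
  obtain ⟨θ, hθ, hθ₁, M, hM, hD⟩ :=
    hgen.exists_ballCount_diff_le_pow hB zero_le_two (by linarith) hC (θ₀ := 3 / 4) (by norm_num)
  have hqρ : (2 * r : ℝ) ≤ 8 / 9 * (Q * θ) ^ 2 := by
    have hQθ : 3 / 4 * Q ≤ Q * θ := by nlinarith
    nlinarith [mul_le_mul hQθ hQθ (by positivity) (by positivity)]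
  refine expGeneric_of_ballCount_diff_le (fun u ⟨_, _, hwu⟩ => hwu.2.1)
    (ballCount_pos nil_mem_reduced) (by linarith) hθ₁ (M := 9 * M) fun n => ?_
  calc (ballCount r ({u | Reduced u} \ {u | ∃ w ∈ B, CyclicReductionOf w u}) n : ℝ)
      ≤ ∑ k ∈ range (n / 2 + 1), (2 * r : ℝ) ^ k * ballCount r (CRset r \ B) (n - 2 * k) := by
        exact_mod_cast
          (ballCount_mono (reduced_diff_subset_conj B) n).trans (ballCount_conj_le _ n)
    _ ≤ M / (1 - 8 / 9) * (Q * θ) ^ n :=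
        sum_pow_mul_le (by positivity) (by positivity) (by norm_num) (by norm_num) hqρ hM hD n
    _ = 9 * M * θ ^ n * Q ^ n := by
        rw [show (1 : ℝ) - 8 / 9 = 9⁻¹ by norm_num, div_inv_eq_mul, mul_pow]
        ring
    _ ≤ 9 * M * θ ^ n * ballCount r {u | Reduced u} n := by
        gcongr
        rw [← hQ]
        exact_mod_cast pow_le_ballCount_reduced n
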